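/- Let (a^t, b^t)_{t≥0} denote the re-parameterized Population EM iterates for Model 2. If a^0 = 0, then a^t = 0 for every t ≥ 0, and moreover for every t ≥ 0 the b-iterate satisfies b^{t+1} = ∫_{ℝ^d} (2·w_d(y, b^t) − 1)·y·g(y) dy, where g(y) = (φ_d(y − θ*) + φ_d(y + θ*))/2 is the density of the mixture 0.5·N(−θ*, I_d) + 0.5·N(θ*, I_d); i.e., the recursion for b^t coincides with the Population EM update for Model 1. -/

import Mathlib

open MeasureTheory Real Filter InnerProductGeometry RealInnerProductSpace

/-- Standard Gaussian density on `ℝ^d` (identity covariance, mean zero). -/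
noncomputable def gpdf (d : ℕ) (x : EuclideanSpace ℝ (Fin d)) : ℝ :=
  (2 * π) ^ (-(d : ℝ) / 2) * Real.exp (-‖x‖ ^ 2 / 2)

/-- `w_d(y, θ) = φ_d(y − θ)/(φ_d(y − θ) + φ_d(y + θ))`. -/
noncomputable def w1 (d : ℕ) (y θ : EuclideanSpace ℝ (Fin d)) : ℝ :=
  gpdf d (y - θ) / (gpdf d (y - θ) + gpdf d (y + θ))

/-- The density of the mixture `0.5 N(−θ*, I_d) + 0.5 N(θ*, I_d)`. -/
noncomputable def mix1 (d : ℕ) (θs y : EuclideanSpace ℝ (Fin d)) : ℝ :=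
  (gpdf d (y - θs) + gpdf d (y + θs)) / 2

/-- Population EM iterates for Model 1:
`θ^{t+1} = ∫ (2 w_d(y, θ^t) − 1) · y · f(y) dy`. -/
noncomputable def em1 (d : ℕ) (θs θ0 : EuclideanSpace ℝ (Fin d)) :
    ℕ → EuclideanSpace ℝ (Fin d)
  | 0 => θ0
  | t + 1 => ∫ y, ((2 * w1 d y (em1 d θs θ0 t) - 1) * mix1 d θs y) • y

/-- `v_d(y, μ1, μ2) = φ_d(y − μ1)/(φ_d(y − μ1) + φ_d(y − μ2))`. -/
noncomputable def v2 (d : ℕ) (y μ1 μ2 : EuclideanSpace ℝ (Fin d)) : ℝ :=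
  gpdf d (y - μ1) / (gpdf d (y - μ1) + gpdf d (y - μ2))

/-- The density of the mixture `0.5 N(μ1*, I_d) + 0.5 N(μ2*, I_d)`. -/
noncomputable def mix2 (d : ℕ) (μ1s μ2s y : EuclideanSpace ℝ (Fin d)) : ℝ :=
  (gpdf d (y - μ1s) + gpdf d (y - μ2s)) / 2

/-- Population EM iterates `(μ1^t, μ2^t)` for Model 2. -/
noncomputable def em2 (d : ℕ) (μ1s μ2s μ10 μ20 : EuclideanSpace ℝ (Fin d)) :
    ℕ → EuclideanSpace ℝ (Fin d) × EuclideanSpace ℝ (Fin d)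
  | 0 => (μ10, μ20)
  | t + 1 =>
    let p := em2 d μ1s μ2s μ10 μ20 t
    ((∫ y, v2 d y p.1 p.2 * mix2 d μ1s μ2s y)⁻¹ •
        ∫ y, (v2 d y p.1 p.2 * mix2 d μ1s μ2s y) • y,
     (∫ y, (1 - v2 d y p.1 p.2) * mix2 d μ1s μ2s y)⁻¹ •
        ∫ y, ((1 - v2 d y p.1 p.2) * mix2 d μ1s μ2s y) • y)

/-- Re-parameterized iterate `a^t = (μ1^t + μ2^t)/2 − (μ1* + μ2*)/2`. -/
noncomputable def aIter (d : ℕ) (μ1s μ2s μ10 μ20 : EuclideanSpace ℝ (Fin d)) (t : ℕ) :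
    EuclideanSpace ℝ (Fin d) :=
  (2:ℝ)⁻¹ • ((em2 d μ1s μ2s μ10 μ20 t).1 + (em2 d μ1s μ2s μ10 μ20 t).2) -
    (2:ℝ)⁻¹ • (μ1s + μ2s)

/-- Re-parameterized iterate `b^t = (μ2^t − μ1^t)/2`. -/
noncomputable def bIter (d : ℕ) (μ1s μ2s μ10 μ20 : EuclideanSpace ℝ (Fin d)) (t : ℕ) :
    EuclideanSpace ℝ (Fin d) :=
  (2:ℝ)⁻¹ • ((em2 d μ1s μ2s μ10 μ20 t).2 - (em2 d μ1s μ2s μ10 μ20 t).1)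

/-- `θ* = (μ2* − μ1*)/2`. -/
noncomputable def thetaStar (d : ℕ) (μ1s μ2s : EuclideanSpace ℝ (Fin d)) :
    EuclideanSpace ℝ (Fin d) :=
  (2:ℝ)⁻¹ • (μ2s - μ1s)

/-! The EM update is equivariant under translations, so in the coordinates centred at the
midpoint `c = (μ1* + μ2*)/2` of the true means the data density becomes the symmetric mixture
`g = mix1 θ*`. If the current means are `c ∓ b`, the two responsibilities become
`w_d(c − y, b)` and `w_d(y − c, b)`, i.e. the reflection `z ↦ −z` of one another, and the
symmetry of `g` gives both of them total mass `1/2`. Hence the two new means are `c ∓ m` with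
`m = ∫ (2 w_d(z, b) − 1) z g(z) dz`: the midpoint stays at `c` and the half-difference follows
the Model 1 update. -/

namespace MeasureTheory

variable {E : Type*} [NormedAddCommGroup E] [NormedSpace ℝ E] [MeasurableSpace E]
  {μ : Measure E} {f : E → ℝ}

theorem Integrable.comp_sub_right_smul [MeasurableAdd E] [μ.IsAddRightInvariant]
    (hf : Integrable f μ) (hfx : Integrable (fun z => f z • z) μ) (c : E) :
    Integrable (fun y => f (y - c) • y) μ :=
  ((hfx.add (hf.smul_const c)).comp_sub_right c).congr
    (ae_of_all _ fun y => by simp only [Pi.add_apply, ← smul_add, sub_add_cancel])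

theorem integral_comp_sub_right_smul [CompleteSpace E] [MeasurableAdd E] [μ.IsAddRightInvariant]
    (hf : Integrable f μ) (hfx : Integrable (fun z => f z • z) μ) (c : E) :
    ∫ y, f (y - c) • y ∂μ = (∫ z, f z ∂μ) • c + ∫ z, f z • z ∂μ := by
  calc ∫ y, f (y - c) • y ∂μ = ∫ y, f (y - c) • (y - c + c) ∂μ := by simp_rw [sub_add_cancel]
    _ = ∫ z, (f z • z + f z • c) ∂μ :=
      (integral_sub_right_eq_self (fun z => f z • (z + c)) c).trans (by simp_rw [smul_add])
    _ = (∫ z, f z ∂μ) • c + ∫ z, f z • z ∂μ := by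
      rw [integral_add hfx (hf.smul_const c), integral_smul_const, add_comm]

theorem integral_comp_sub_left_smul [CompleteSpace E] [MeasurableAdd E] [MeasurableNeg E]
    [μ.IsNegInvariant] [μ.IsAddLeftInvariant] (hf : Integrable f μ)
    (hfx : Integrable (fun z => f z • z) μ) (c : E) :
    ∫ y, f (c - y) • y ∂μ = (∫ z, f z ∂μ) • c - ∫ z, f z • z ∂μ := by
  calc ∫ y, f (c - y) • y ∂μ = ∫ y, f (c - y) • (c - (c - y)) ∂μ := by simp_rw [sub_sub_cancel]
    _ = ∫ z, (f z • c - f z • z) ∂μ :=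
      (integral_sub_left_eq_self (fun z => f z • (c - z)) μ c).trans (by simp_rw [smul_sub])
    _ = (∫ z, f z ∂μ) • c - ∫ z, f z • z ∂μ := by
      rw [integral_sub (hf.smul_const c) hfx, integral_smul_const]

theorem integral_sub_comp_neg_smul [MeasurableNeg E] [μ.IsNegInvariant]
    (hfx : Integrable (fun z => f z • z) μ) :
    ∫ z, (f z - f (-z)) • z ∂μ = (2 : ℝ) • ∫ z, f z • z ∂μ := by
  have hodd : ∫ z, f (-z) • z ∂μ = -∫ z, f z • z ∂μ := by
    rw [← integral_neg_eq_self (fun z => f z • z) μ, ← integral_neg]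
    simp_rw [smul_neg, neg_neg]
  have hfx' : Integrable (fun z => f (-z) • z) μ :=
    hfx.comp_neg.neg.congr (ae_of_all _ fun z => by simp only [Pi.neg_apply, smul_neg, neg_neg])
  simp_rw [sub_smul]
  rw [integral_sub hfx hfx', hodd, sub_neg_eq_add, two_smul]

end MeasureTheory

section Gaussian

variable {d : ℕ}

theorem gpdf_pos (x : EuclideanSpace ℝ (Fin d)) : 0 < gpdf d x := by
  have := pi_pos
  unfold gpdf
  positivity

theorem gpdf_neg (x : EuclideanSpace ℝ (Fin d)) : gpdf d (-x) = gpdf d x := by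
  rw [gpdf, gpdf, norm_neg]

theorem continuous_gpdf : Continuous (gpdf d) := by
  unfold gpdf
  fun_prop

theorem gpdf_eq_mul_exp (x : EuclideanSpace ℝ (Fin d)) :
    gpdf d x = (2 * π) ^ (-(d : ℝ) / 2) * rexp (-2⁻¹ * ‖x‖ ^ 2) := by
  rw [gpdf]
  ring_nf

theorem integral_gpdf : ∫ x, gpdf d x = 1 := by
  simp_rw [gpdf_eq_mul_exp]
  rw [integral_const_mul, GaussianFourier.integral_rexp_neg_mul_sq_norm (by norm_num),
    finrank_euclideanSpace_fin, show π / 2⁻¹ = 2 * π by ring, ← rpow_add (by positivity),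
    neg_div, neg_add_cancel, rpow_zero]

theorem integrable_gpdf : Integrable (gpdf d) :=
  Integrable.of_integral_ne_zero (by rw [integral_gpdf]; exact one_ne_zero)

theorem integrable_exp_neg_mul_sq_norm {b : ℝ} (hb : 0 < b) :
    Integrable fun x : EuclideanSpace ℝ (Fin d) => rexp (-b * ‖x‖ ^ 2) :=
  Integrable.of_integral_ne_zero <| by
    rw [GaussianFourier.integral_rexp_neg_mul_sq_norm hb]
    exact (rpow_pos_of_pos (div_pos pi_pos hb) _).ne'

theorem integrable_gpdf_smul : Integrable fun x : EuclideanSpace ℝ (Fin d) => gpdf d x • x := by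
  refine ((integrable_exp_neg_mul_sq_norm (d := d) (b := 4⁻¹) (by norm_num)).const_mul
    ((2 * π) ^ (-(d : ℝ) / 2))).mono'
    (continuous_gpdf.smul continuous_id).aestronglyMeasurable (ae_of_all _ fun x => ?_)
  -- `‖x‖ ≤ 1 + ‖x‖²/4 ≤ exp (‖x‖²/4)`
  have hnorm : ‖x‖ ≤ rexp (4⁻¹ * ‖x‖ ^ 2) := by
    nlinarith [add_one_le_exp (4⁻¹ * ‖x‖ ^ 2), sq_nonneg (‖x‖ - 2)]
  rw [norm_smul, norm_of_nonneg (gpdf_pos x).le, gpdf_eq_mul_exp]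
  calc (2 * π) ^ (-(d : ℝ) / 2) * rexp (-2⁻¹ * ‖x‖ ^ 2) * ‖x‖
      ≤ (2 * π) ^ (-(d : ℝ) / 2) * rexp (-2⁻¹ * ‖x‖ ^ 2) * rexp (4⁻¹ * ‖x‖ ^ 2) := by
        gcongr
    _ = (2 * π) ^ (-(d : ℝ) / 2) * rexp (-4⁻¹ * ‖x‖ ^ 2) := by
        rw [mul_assoc, ← exp_add]
        ring_nf

end Gaussian

section Model1

variable {d : ℕ}

theorem mix1_neg (θs z : EuclideanSpace ℝ (Fin d)) : mix1 d θs (-z) = mix1 d θs z := by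
  rw [mix1, mix1, show -z - θs = -(z + θs) by abel, show -z + θs = -(z - θs) by abel,
    gpdf_neg, gpdf_neg, add_comm]

theorem mix1_eq_inv_two_mul (θs : EuclideanSpace ℝ (Fin d)) :
    mix1 d θs = fun z => (2 : ℝ)⁻¹ * (gpdf d (z - θs) + gpdf d (z - -θs)) := by
  ext z
  rw [mix1, sub_neg_eq_add, div_eq_inv_mul]

theorem integrable_mix1 (θs : EuclideanSpace ℝ (Fin d)) : Integrable (mix1 d θs) := by
  rw [mix1_eq_inv_two_mul]
  exact ((integrable_gpdf.comp_sub_right θs).add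
    (integrable_gpdf.comp_sub_right (-θs))).const_mul _

theorem integral_mix1 (θs : EuclideanSpace ℝ (Fin d)) : ∫ z, mix1 d θs z = 1 := by
  rw [mix1_eq_inv_two_mul, integral_const_mul, integral_add (integrable_gpdf.comp_sub_right θs)
    (integrable_gpdf.comp_sub_right (-θs)), integral_sub_right_eq_self (gpdf d),
    integral_sub_right_eq_self (gpdf d), integral_gpdf]
  norm_num

theorem integrable_mix1_smul (θs : EuclideanSpace ℝ (Fin d)) :
    Integrable fun z => mix1 d θs z • z := by
  simp_rw [mix1_eq_inv_two_mul, mul_smul, add_smul]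
  have h := (integrable_gpdf.comp_sub_right_smul integrable_gpdf_smul θs).add
    (integrable_gpdf.comp_sub_right_smul integrable_gpdf_smul (-θs))
  exact h.smul (2 : ℝ)⁻¹

theorem w1_nonneg (z b : EuclideanSpace ℝ (Fin d)) : 0 ≤ w1 d z b :=
  div_nonneg (gpdf_pos _).le (add_pos (gpdf_pos _) (gpdf_pos _)).le

theorem w1_le_one (z b : EuclideanSpace ℝ (Fin d)) : w1 d z b ≤ 1 :=
  div_le_one_of_le₀ (le_add_of_nonneg_right (gpdf_pos _).le)
    (add_pos (gpdf_pos _) (gpdf_pos _)).le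

theorem norm_w1_le_one (b z : EuclideanSpace ℝ (Fin d)) : ‖w1 d z b‖ ≤ 1 := by
  rw [norm_of_nonneg (w1_nonneg z b)]
  exact w1_le_one z b

theorem w1_neg (z b : EuclideanSpace ℝ (Fin d)) : w1 d (-z) b = 1 - w1 d z b := by
  rw [w1, w1, show -z - b = -(z + b) by abel, show -z + b = -(z - b) by abel, gpdf_neg, gpdf_neg,
    one_sub_div (add_pos (gpdf_pos _) (gpdf_pos _)).ne', add_sub_cancel_left,
    add_comm (gpdf d (z + b))]

theorem continuous_w1 (b : EuclideanSpace ℝ (Fin d)) : Continuous fun z => w1 d z b :=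
  (continuous_gpdf.comp (continuous_sub_right b)).div
    ((continuous_gpdf.comp (continuous_sub_right b)).add
      (continuous_gpdf.comp (continuous_add_const b)))
    fun _ => (add_pos (gpdf_pos _) (gpdf_pos _)).ne'

/-- Joint density of `z` and the label "component centred at `b`" under the Model 1 posterior at
`b`, when the data have density `mix1 θs`. -/
noncomputable def weightedMix1 (d : ℕ) (θs b z : EuclideanSpace ℝ (Fin d)) : ℝ :=
  w1 d z b * mix1 d θs z

noncomputable def em1Update (d : ℕ) (θs θ : EuclideanSpace ℝ (Fin d)) :
    EuclideanSpace ℝ (Fin d) :=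
  ∫ y, ((2 * w1 d y θ - 1) * mix1 d θs y) • y

variable (θs b : EuclideanSpace ℝ (Fin d))

theorem weightedMix1_add_neg (z : EuclideanSpace ℝ (Fin d)) :
    weightedMix1 d θs b z + weightedMix1 d θs b (-z) = mix1 d θs z := by
  rw [weightedMix1, weightedMix1, w1_neg, mix1_neg]
  ring

theorem weightedMix1_sub_neg (z : EuclideanSpace ℝ (Fin d)) :
    weightedMix1 d θs b z - weightedMix1 d θs b (-z) = (2 * w1 d z b - 1) * mix1 d θs z := by
  rw [weightedMix1, weightedMix1, w1_neg, mix1_neg]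
  ring

theorem integrable_weightedMix1 : Integrable (weightedMix1 d θs b) :=
  (integrable_mix1 θs).bdd_mul (continuous_w1 b).aestronglyMeasurable
    (ae_of_all _ (norm_w1_le_one b))

theorem integrable_weightedMix1_smul : Integrable fun z => weightedMix1 d θs b z • z := by
  simp_rw [weightedMix1, mul_smul]
  exact (integrable_mix1_smul θs).bdd_smul 1 (continuous_w1 b).aestronglyMeasurable
    (ae_of_all _ (norm_w1_le_one b))

theorem integral_weightedMix1 : ∫ z, weightedMix1 d θs b z = 2⁻¹ := by
  have hsum : (∫ z, weightedMix1 d θs b z) + ∫ z, weightedMix1 d θs b (-z) = 1 := by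
    rw [← integral_add (integrable_weightedMix1 θs b) (integrable_weightedMix1 θs b).comp_neg]
    simp_rw [weightedMix1_add_neg]
    exact integral_mix1 θs
  rw [integral_neg_eq_self (weightedMix1 d θs b)] at hsum
  linarith

theorem em1Update_eq_two_smul :
    em1Update d θs b = (2 : ℝ) • ∫ z, weightedMix1 d θs b z • z := by
  simp_rw [em1Update, ← weightedMix1_sub_neg]
  exact integral_sub_comp_neg_smul (integrable_weightedMix1_smul θs b)

end Model1

section Model2

variable {d : ℕ}

noncomputable def em2Update (d : ℕ) (μ1s μ2s : EuclideanSpace ℝ (Fin d))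
    (p : EuclideanSpace ℝ (Fin d) × EuclideanSpace ℝ (Fin d)) :
    EuclideanSpace ℝ (Fin d) × EuclideanSpace ℝ (Fin d) :=
  ((∫ y, v2 d y p.1 p.2 * mix2 d μ1s μ2s y)⁻¹ • ∫ y, (v2 d y p.1 p.2 * mix2 d μ1s μ2s y) • y,
   (∫ y, (1 - v2 d y p.1 p.2) * mix2 d μ1s μ2s y)⁻¹ •
      ∫ y, ((1 - v2 d y p.1 p.2) * mix2 d μ1s μ2s y) • y)

theorem em2_succ (μ1s μ2s μ10 μ20 : EuclideanSpace ℝ (Fin d)) (t : ℕ) :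
    em2 d μ1s μ2s μ10 μ20 (t + 1) = em2Update d μ1s μ2s (em2 d μ1s μ2s μ10 μ20 t) :=
  rfl

theorem one_sub_v2 (y μ1 μ2 : EuclideanSpace ℝ (Fin d)) : 1 - v2 d y μ1 μ2 = v2 d y μ2 μ1 := by
  rw [v2, v2, one_sub_div (add_pos (gpdf_pos _) (gpdf_pos _)).ne', add_sub_cancel_left,
    add_comm]

theorem v2_sub_add (y c b : EuclideanSpace ℝ (Fin d)) :
    v2 d y (c - b) (c + b) = w1 d (c - y) b := by
  rw [v2, w1, show y - (c - b) = -(c - y - b) by abel, show y - (c + b) = -(c - y + b) by abel,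
    gpdf_neg, gpdf_neg]

theorem v2_add_sub (y c b : EuclideanSpace ℝ (Fin d)) :
    v2 d y (c + b) (c - b) = w1 d (y - c) b := by
  rw [v2, w1, sub_add_eq_sub_sub, sub_sub_eq_add_sub, add_sub_right_comm]

theorem mix2_eq_mix1 (μ1s μ2s y : EuclideanSpace ℝ (Fin d)) :
    mix2 d μ1s μ2s y = mix1 d (thetaStar d μ1s μ2s) (y - (2 : ℝ)⁻¹ • (μ1s + μ2s)) := by
  rw [mix2, mix1, thetaStar, add_comm (gpdf d _)]
  congr 3 <;> module

theorem em2_eq_sub_add_of_aIter_eq_zero {μ1s μ2s μ10 μ20 : EuclideanSpace ℝ (Fin d)} {t : ℕ}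
    (ht : aIter d μ1s μ2s μ10 μ20 t = 0) :
    em2 d μ1s μ2s μ10 μ20 t = ((2 : ℝ)⁻¹ • (μ1s + μ2s) - bIter d μ1s μ2s μ10 μ20 t,
      (2 : ℝ)⁻¹ • (μ1s + μ2s) + bIter d μ1s μ2s μ10 μ20 t) := by
  rw [aIter, sub_eq_zero] at ht
  ext1 <;> rw [bIter, ← ht] <;> module

theorem em2Update_sub_add (μ1s μ2s b : EuclideanSpace ℝ (Fin d)) :
    em2Update d μ1s μ2s ((2 : ℝ)⁻¹ • (μ1s + μ2s) - b, (2 : ℝ)⁻¹ • (μ1s + μ2s) + b) =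
      ((2 : ℝ)⁻¹ • (μ1s + μ2s) - em1Update d (thetaStar d μ1s μ2s) b,
        (2 : ℝ)⁻¹ • (μ1s + μ2s) + em1Update d (thetaStar d μ1s μ2s) b) := by
  set c := (2 : ℝ)⁻¹ • (μ1s + μ2s)
  set θ := thetaStar d μ1s μ2s
  have hv (y : EuclideanSpace ℝ (Fin d)) :
      v2 d y (c - b) (c + b) * mix2 d μ1s μ2s y = weightedMix1 d θ b (c - y) := by
    rw [v2_sub_add, mix2_eq_mix1, ← mix1_neg, neg_sub, weightedMix1]
  have hv' (y : EuclideanSpace ℝ (Fin d)) :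
      (1 - v2 d y (c - b) (c + b)) * mix2 d μ1s μ2s y = weightedMix1 d θ b (y - c) := by
    rw [one_sub_v2, v2_add_sub, mix2_eq_mix1, weightedMix1]
  have hρ := integrable_weightedMix1 θ b
  have hρx := integrable_weightedMix1_smul θ b
  simp only [em2Update, hv, hv', integral_sub_left_eq_self (weightedMix1 d θ b),
    integral_sub_right_eq_self (weightedMix1 d θ b), integral_comp_sub_left_smul hρ hρx,
    integral_comp_sub_right_smul hρ hρx, integral_weightedMix1, em1Update_eq_two_smul]
  ext1 <;> module

end Model2

theorem stmt9_general (d : ℕ) (μ1s μ2s μ10 μ20 : EuclideanSpace ℝ (Fin d))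
    (ha0 : aIter d μ1s μ2s μ10 μ20 0 = 0) :
    (∀ t : ℕ, aIter d μ1s μ2s μ10 μ20 t = 0) ∧
    (∀ t : ℕ, bIter d μ1s μ2s μ10 μ20 (t + 1) =
      ∫ y, ((2 * w1 d y (bIter d μ1s μ2s μ10 μ20 t) - 1) *
        mix1 d (thetaStar d μ1s μ2s) y) • y) := by
  set c := (2 : ℝ)⁻¹ • (μ1s + μ2s)
  set m := fun t => em1Update d (thetaStar d μ1s μ2s) (bIter d μ1s μ2s μ10 μ20 t)
  have hstep (t : ℕ) (ht : aIter d μ1s μ2s μ10 μ20 t = 0) :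
      em2 d μ1s μ2s μ10 μ20 (t + 1) = (c - m t, c + m t) := by
    rw [em2_succ, em2_eq_sub_add_of_aIter_eq_zero ht, em2Update_sub_add]
  have ha (t : ℕ) : aIter d μ1s μ2s μ10 μ20 t = 0 := by
    induction t with
    | zero => exact ha0
    | succ t ih => rw [aIter, hstep t ih]; module
  refine ⟨ha, fun t => ?_⟩
  rw [bIter, hstep t (ha t)]
  change _ = m t
  module

/-- If `a^0 = 0` then `a^t = 0` for all `t`, and the recursion for `b^t` coincides with
the Population EM update for Model 1 with true parameter `θ* = (μ2* − μ1*)/2`. -/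
theorem stmt9 (d : ℕ) (hd : 1 ≤ d) (μ1s μ2s μ10 μ20 : EuclideanSpace ℝ (Fin d))
    (ha0 : aIter d μ1s μ2s μ10 μ20 0 = 0) :
    (∀ t : ℕ, aIter d μ1s μ2s μ10 μ20 t = 0) ∧
    (∀ t : ℕ, bIter d μ1s μ2s μ10 μ20 (t + 1) =
      ∫ y, ((2 * w1 d y (bIter d μ1s μ2s μ10 μ20 t) - 1) *
        mix1 d (thetaStar d μ1s μ2s) y) • y) :=
  stmt9_general d μ1s μ2s μ10 μ20 ha0
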